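/- arXiv:2412.10370 — 2 statements merged into one kernel-verified Lean document; each statement's English description precedes it below -/
import Mathlib

section
/- Let P be an Ising model on variables x_0, x_1, …, x_n with parameters w_{i,j} (0 ≤ i < j ≤ n) and h_i (0 ≤ i ≤ n), with w_{0,i} = 0 for all 1 ≤ i ≤ n. Fix 1 ≤ k ≤ n and δ > 0, and let Q be the Ising model with the same parameters except w'_{0,k} = δ. Then dTV(P, Q) = exp(2 h_0)/(exp(2 h_0) + 1) − Σ_{x : x_0 x_k = −1} Q(x) + ((1 − exp(2 h_0))/(exp(2 h_0) + 1)) · Pr_P[x_k = 1]. -/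
open Finset

/-- The spin value (`+1` or `−1`) encoded by a Boolean. -/
noncomputable def spin (b : Bool) : ℝ := if b then 1 else -1

/-- The (unnormalized) weight of a configuration `x ∈ {−1,1}^N` of the Ising model with
pair parameters `w i j` (used for `i < j`) and field parameters `h i`:
`E(x) = exp(Σ_{i<j} w_{i,j} x_i x_j + Σ_i h_i x_i)`. -/
noncomputable def isingWeight {N : ℕ} (w : Fin N → Fin N → ℝ) (h : Fin N → ℝ)
    (x : Fin N → Bool) : ℝ :=
  Real.exp ((∑ i, ∑ j ∈ Finset.Ioi i, w i j * spin (x i) * spin (x j)) +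
    ∑ i, h i * spin (x i))

/-- The partition function `Z = Σ_x E(x)` of the Ising model. -/
noncomputable def isingZ {N : ℕ} (w : Fin N → Fin N → ℝ) (h : Fin N → ℝ) : ℝ :=
  ∑ x : Fin N → Bool, isingWeight w h x

/-- The probability `P(x) = E(x)/Z` of a configuration of the Ising model. -/
noncomputable def isingProb {N : ℕ} (w : Fin N → Fin N → ℝ) (h : Fin N → ℝ)
    (x : Fin N → Bool) : ℝ :=
  isingWeight w h x / isingZ w h

open scoped Classical

lemma spin_mul_cases (a b : Bool) : spin a * spin b = 1 ∨ spin a * spin b = -1 := by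
  cases a <;> cases b <;> simp [spin]

lemma univ_split {n : ℕ} (f : Fin (n+1) → ℝ) :
    ∑ i, f i = f 0 + ∑ i ∈ Finset.Ioi (0 : Fin (n+1)), f i := by
  have h : (Finset.univ : Finset (Fin (n+1))) = insert 0 (Finset.Ioi 0) := by
    ext i
    simp only [mem_univ, mem_insert, mem_Ioi, true_iff, Fin.pos_iff_ne_zero]
    tauto
  rw [h, Finset.sum_insert (by simp)]

noncomputable def auxA {n : ℕ} (w : Fin (n+1) → Fin (n+1) → ℝ) (h : Fin (n+1) → ℝ)
    (x : Fin (n+1) → Bool) : ℝ :=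
  (∑ i ∈ Finset.Ioi (0 : Fin (n+1)), ∑ j ∈ Finset.Ioi i, w i j * spin (x i) * spin (x j)) +
    ∑ i ∈ Finset.Ioi (0 : Fin (n+1)), h i * spin (x i)

lemma auxA_update {n : ℕ} (w : Fin (n+1) → Fin (n+1) → ℝ) (h : Fin (n+1) → ℝ)
    (x : Fin (n+1) → Bool) (b : Bool) :
    auxA w h (Function.update x 0 b) = auxA w h x := by
  unfold auxA
  congr 1
  · refine Finset.sum_congr rfl fun i hi => Finset.sum_congr rfl fun j hj => ?_
    have hi0 : i ≠ 0 := (Finset.mem_Ioi.mp hi).ne'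
    have hj0 : j ≠ 0 := by
      have := (Finset.mem_Ioi.mp hj)
      have := Finset.mem_Ioi.mp hi
      intro hj0; subst hj0; exact absurd (lt_trans ‹(0:Fin (n+1)) < i› ‹i < 0›) (lt_irrefl _)
    rw [Function.update_of_ne hi0, Function.update_of_ne hj0]
  · refine Finset.sum_congr rfl fun i hi => ?_
    rw [Function.update_of_ne (Finset.mem_Ioi.mp hi).ne']

lemma weight_eq {n : ℕ} (w : Fin (n+1) → Fin (n+1) → ℝ) (h : Fin (n+1) → ℝ)
    (hw0 : ∀ i : Fin (n+1), i ≠ 0 → w 0 i = 0) (x : Fin (n+1) → Bool) :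
    isingWeight w h x = Real.exp (h 0 * spin (x 0)) * Real.exp (auxA w h x) := by
  unfold isingWeight auxA
  rw [univ_split (fun i => ∑ j ∈ Finset.Ioi i, w i j * spin (x i) * spin (x j)),
    univ_split (fun i => h i * spin (x i)), ← Real.exp_add]
  have h0 : ∑ j ∈ Finset.Ioi (0 : Fin (n+1)), w 0 j * spin (x 0) * spin (x j) = 0 :=
    Finset.sum_eq_zero fun j hj => by rw [hw0 j (Finset.mem_Ioi.mp hj).ne']; ring
  rw [h0]
  congr 1
  ring

lemma weight'_eq {n : ℕ} (w : Fin (n+1) → Fin (n+1) → ℝ) (h : Fin (n+1) → ℝ)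
    (hw0 : ∀ i : Fin (n+1), i ≠ 0 → w 0 i = 0)
    (k : Fin (n+1)) (hk : k ≠ 0) (δ : ℝ)
    (w' : Fin (n+1) → Fin (n+1) → ℝ)
    (hw' : ∀ i j, w' i j = if i = 0 ∧ j = k then δ else w i j)
    (x : Fin (n+1) → Bool) :
    isingWeight w' h x = Real.exp (δ * (spin (x 0) * spin (x k))) *
      (Real.exp (h 0 * spin (x 0)) * Real.exp (auxA w h x)) := by
  unfold isingWeight auxA
  rw [univ_split (fun i => ∑ j ∈ Finset.Ioi i, w' i j * spin (x i) * spin (x j)),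
    univ_split (fun i => h i * spin (x i)), ← Real.exp_add, ← Real.exp_add]
  have h0 : ∑ j ∈ Finset.Ioi (0 : Fin (n+1)), w' 0 j * spin (x 0) * spin (x j)
      = δ * (spin (x 0) * spin (x k)) := by
    have : ∀ j ∈ Finset.Ioi (0 : Fin (n+1)), w' 0 j * spin (x 0) * spin (x j)
        = if j = k then δ * (spin (x 0) * spin (x j)) else 0 := by
      intro j hj
      rw [hw' 0 j]
      by_cases hjk : j = k
      · simp [hjk]; ring
      · simp [hjk, hw0 j (Finset.mem_Ioi.mp hj).ne']
    rw [Finset.sum_congr rfl this, Finset.sum_ite_eq' (Finset.Ioi 0) k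
      (fun j => δ * (spin (x 0) * spin (x j)))]
    simp [Finset.mem_Ioi, Fin.pos_iff_ne_zero, hk]
  have h1 : ∑ i ∈ Finset.Ioi (0 : Fin (n+1)), ∑ j ∈ Finset.Ioi i,
        w' i j * spin (x i) * spin (x j)
      = ∑ i ∈ Finset.Ioi (0 : Fin (n+1)), ∑ j ∈ Finset.Ioi i,
        w i j * spin (x i) * spin (x j) := by
    refine Finset.sum_congr rfl fun i hi => Finset.sum_congr rfl fun j hj => ?_
    rw [hw' i j, if_neg (by simp [(Finset.mem_Ioi.mp hi).ne'])]
  rw [h0, h1]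
  congr 1
  ring

lemma star {n : ℕ} (w : Fin (n+1) → Fin (n+1) → ℝ) (h : Fin (n+1) → ℝ)
    (k : Fin (n+1)) (hk : k ≠ 0) :
    (Real.exp (h 0)^2 + 1) *
      (∑ x ∈ Finset.univ.filter (fun x : Fin (n+1) → Bool => spin (x 0) * spin (x k) = -1),
        Real.exp (h 0 * spin (x 0)) * Real.exp (auxA w h x))
    = Real.exp (h 0)^2 *
        (∑ x : Fin (n+1) → Bool, Real.exp (h 0 * spin (x 0)) * Real.exp (auxA w h x))
      + (1 - Real.exp (h 0)^2) *
        (∑ x ∈ Finset.univ.filter (fun x : Fin (n+1) → Bool => spin (x k) = 1),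
          Real.exp (h 0 * spin (x 0)) * Real.exp (auxA w h x)) := by
  set u := Real.exp (h 0) with hu
  have hu0 : u ≠ 0 := Real.exp_ne_zero _
  set E : (Fin (n+1) → Bool) → ℝ :=
    fun x => Real.exp (h 0 * spin (x 0)) * Real.exp (auxA w h x) with hE
  set g : (Fin (n+1) → Bool) → ℝ := fun x =>
    (u^2+1) * (if spin (x 0) * spin (x k) = -1 then E x else 0)
    - u^2 * E x
    - (1-u^2) * (if spin (x k) = 1 then E x else 0) with hg
  set flip : (Fin (n+1) → Bool) → (Fin (n+1) → Bool) :=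
    fun x => Function.update x 0 (!(x 0)) with hflip
  have flip_inv : Function.Involutive flip := by
    intro x
    simp only [hflip]
    rw [Function.update_self, Function.update_idem, Bool.not_not, Function.update_eq_self]
  have key : ∀ x, g x + g (flip x) = 0 := by
    intro x
    have hA : auxA w h (flip x) = auxA w h x := auxA_update w h x _
    have h0 : flip x 0 = !(x 0) := Function.update_self _ _ _
    have hkk : flip x k = x k := Function.update_of_ne hk _ _
    simp only [hg, hE, hA, h0, hkk]
    cases hx0 : x 0 <;> cases hxk : x k <;>
      · norm_num [spin, Real.exp_neg, ← hu]
        field_simp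
        ring
  have hgsum : ∑ x : Fin (n+1) → Bool, g x = 0 := by
    have hsc : ∑ x : Fin (n+1) → Bool, g (flip x) = ∑ x : Fin (n+1) → Bool, g x :=
      Function.Bijective.sum_comp flip_inv.bijective g
    have h2 : (∑ x : Fin (n+1) → Bool, g x) + ∑ x : Fin (n+1) → Bool, g (flip x) = 0 := by
      rw [← Finset.sum_add_distrib]
      rw [Finset.sum_congr rfl fun x _ => key x]
      simp
    rw [hsc] at h2
    linarith
  have expand : ∑ x : Fin (n+1) → Bool, g x
      = (u^2+1) * (∑ x ∈ Finset.univ.filter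
            (fun x : Fin (n+1) → Bool => spin (x 0) * spin (x k) = -1), E x)
        - u^2 * (∑ x : Fin (n+1) → Bool, E x)
        - (1-u^2) * (∑ x ∈ Finset.univ.filter
            (fun x : Fin (n+1) → Bool => spin (x k) = 1), E x) := by
    simp only [hg]
    rw [Finset.sum_sub_distrib, Finset.sum_sub_distrib, ← Finset.mul_sum, ← Finset.mul_sum,
      ← Finset.mul_sum, ← Finset.sum_filter, ← Finset.sum_filter]
  rw [expand] at hgsum
  linarith

/-- let `P` be an Ising model on `x_0, …, x_n` with `w_{0,i} = 0` for all
`i ≥ 1`, and let `Q` be the same model except that `w'_{0,k} = δ > 0`. Then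
`dTV(P,Q) = exp(2h_0)/(exp(2h_0)+1) − Σ_{x : x_0 x_k = −1} Q(x)
  + ((1 − exp(2h_0))/(exp(2h_0)+1)) · Pr_P[x_k = 1]`. -/
theorem ising_tv_formula
    (n : ℕ) (w : Fin (n + 1) → Fin (n + 1) → ℝ) (h : Fin (n + 1) → ℝ)
    (hw0 : ∀ i : Fin (n + 1), i ≠ 0 → w 0 i = 0)
    (k : Fin (n + 1)) (hk : k ≠ 0) (δ : ℝ) (hδ : 0 < δ)
    (w' : Fin (n + 1) → Fin (n + 1) → ℝ)
    (hw' : ∀ i j, w' i j = if i = 0 ∧ j = k then δ else w i j) :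
    (∑ x : Fin (n + 1) → Bool, max 0 (isingProb w h x - isingProb w' h x))
    = Real.exp (2 * h 0) / (Real.exp (2 * h 0) + 1) -
      (∑ x ∈ Finset.univ.filter
          (fun x : Fin (n + 1) → Bool => spin (x 0) * spin (x k) = -1),
        isingProb w' h x) +
      ((1 - Real.exp (2 * h 0)) / (Real.exp (2 * h 0) + 1)) *
        ∑ x ∈ Finset.univ.filter (fun x : Fin (n + 1) → Bool => spin (x k) = 1),
          isingProb w h x := by
  have hWpos : ∀ x : Fin (n+1) → Bool, 0 < isingWeight w h x := fun x => Real.exp_pos _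
  have hZP : 0 < isingZ w h :=
    Finset.sum_pos (fun x _ => hWpos x) ⟨fun _ => true, Finset.mem_univ _⟩
  have hZQ : 0 < isingZ w' h :=
    Finset.sum_pos (fun x _ => Real.exp_pos _) ⟨fun _ => true, Finset.mem_univ _⟩
  have hWQ : ∀ x : Fin (n+1) → Bool,
      isingWeight w' h x = Real.exp (δ * (spin (x 0) * spin (x k))) * isingWeight w h x := by
    intro x
    rw [weight'_eq w h hw0 k hk δ w' hw' x, weight_eq w h hw0 x]
  have hZQ_ge : Real.exp (-δ) * isingZ w h ≤ isingZ w' h := by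
    simp only [isingZ]
    rw [Finset.mul_sum]
    refine Finset.sum_le_sum fun x _ => ?_
    rw [hWQ x]
    refine mul_le_mul_of_nonneg_right ?_ (hWpos x).le
    apply Real.exp_le_exp.mpr
    rcases spin_mul_cases (x 0) (x k) with hs | hs <;> rw [hs] <;> nlinarith
  have hZQ_le : isingZ w' h ≤ Real.exp δ * isingZ w h := by
    simp only [isingZ]
    rw [Finset.mul_sum]
    refine Finset.sum_le_sum fun x _ => ?_
    rw [hWQ x]
    refine mul_le_mul_of_nonneg_right ?_ (hWpos x).le
    apply Real.exp_le_exp.mpr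
    rcases spin_mul_cases (x 0) (x k) with hs | hs <;> rw [hs] <;> nlinarith
  have hpt : ∀ x : Fin (n+1) → Bool,
      max 0 (isingProb w h x - isingProb w' h x)
      = if spin (x 0) * spin (x k) = -1
          then isingProb w h x - isingProb w' h x else 0 := by
    intro x
    by_cases hs : spin (x 0) * spin (x k) = -1
    · rw [if_pos hs]
      refine max_eq_right (sub_nonneg.mpr ?_)
      unfold isingProb
      rw [div_le_div_iff₀ hZQ hZP, hWQ x, hs, show δ * (-1 : ℝ) = -δ by ring]
      nlinarith [hWpos x, hZQ_ge]
    · rw [if_neg hs]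
      have hs1 : spin (x 0) * spin (x k) = 1 :=
        (spin_mul_cases (x 0) (x k)).resolve_right hs
      refine max_eq_left (sub_nonpos.mpr ?_)
      unfold isingProb
      rw [div_le_div_iff₀ hZP hZQ, hWQ x, hs1, show δ * (1 : ℝ) = δ by ring]
      nlinarith [hWpos x, hZQ_le]
  rw [Finset.sum_congr rfl fun x _ => hpt x, ← Finset.sum_filter, Finset.sum_sub_distrib]
  have hu2 : Real.exp (2 * h 0) = Real.exp (h 0) ^ 2 := by
    rw [two_mul, Real.exp_add, sq]
  have hEP : ∀ x : Fin (n+1) → Bool,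
      isingWeight w h x = Real.exp (h 0 * spin (x 0)) * Real.exp (auxA w h x) :=
    weight_eq w h hw0
  have hZE : isingZ w h
      = ∑ x : Fin (n+1) → Bool, Real.exp (h 0 * spin (x 0)) * Real.exp (auxA w h x) :=
    Finset.sum_congr rfl fun x _ => hEP x
  have hstar := star w h k hk
  have hP1 : ∑ x ∈ Finset.univ.filter
        (fun x : Fin (n+1) → Bool => spin (x 0) * spin (x k) = -1), isingProb w h x
      = (∑ x ∈ Finset.univ.filter
          (fun x : Fin (n+1) → Bool => spin (x 0) * spin (x k) = -1),
          Real.exp (h 0 * spin (x 0)) * Real.exp (auxA w h x)) / isingZ w h := by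
    rw [Finset.sum_div]
    refine Finset.sum_congr rfl fun x _ => ?_
    simp only [isingProb]
    rw [hEP x]
  have hPk : ∑ x ∈ Finset.univ.filter
        (fun x : Fin (n+1) → Bool => spin (x k) = 1), isingProb w h x
      = (∑ x ∈ Finset.univ.filter
          (fun x : Fin (n+1) → Bool => spin (x k) = 1),
          Real.exp (h 0 * spin (x 0)) * Real.exp (auxA w h x)) / isingZ w h := by
    rw [Finset.sum_div]
    refine Finset.sum_congr rfl fun x _ => ?_
    simp only [isingProb]
    rw [hEP x]
  rw [hP1, hPk, hu2, hZE]
  set Z : ℝ := ∑ x : Fin (n+1) → Bool,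
      Real.exp (h 0 * spin (x 0)) * Real.exp (auxA w h x) with hZdef
  set a : ℝ := ∑ x ∈ Finset.univ.filter
      (fun x : Fin (n+1) → Bool => spin (x 0) * spin (x k) = -1),
      Real.exp (h 0 * spin (x 0)) * Real.exp (auxA w h x) with hadef
  set b : ℝ := ∑ x ∈ Finset.univ.filter
      (fun x : Fin (n+1) → Bool => spin (x k) = 1),
      Real.exp (h 0 * spin (x 0)) * Real.exp (auxA w h x) with hbdef
  have hZpos : 0 < Z := hZE ▸ hZP
  have hden : Real.exp (h 0) ^ 2 + 1 ≠ 0 := by positivity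
  have hgoal : a / Z = Real.exp (h 0) ^ 2 / (Real.exp (h 0) ^ 2 + 1)
      + ((1 - Real.exp (h 0) ^ 2) / (Real.exp (h 0) ^ 2 + 1)) * (b / Z) := by
    field_simp
    linear_combination hstar
  linarith [hgoal]
end

section
/- Let P be an Ising model on variables x_0, x_1, …, x_n with parameters w_{i,j} (0 ≤ i < j ≤ n) and h_i (0 ≤ i ≤ n), with w_{0,i} = 0 for all 1 ≤ i ≤ n, and partition function Z_P. Fix 1 ≤ k ≤ n and δ > 0, and let Q be the Ising model with the same parameters except w'_{0,k} = δ, with partition function Z_Q. Then |dTV(P, Q) − Pr_P[x_k = 1]| ≤ 3·exp(2 h_0) + exp(−δ) · Z_P / Z_Q. -/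
open Finset

open scoped Classical

/-!
Write `Q(x) = E_P(x) e^{δ x₀ x_k} / Z_Q`. Since `Z_Q ≤ e^δ Z_P`, configurations with
`x₀ = x_k` have `P(x) ≤ Q(x)` and contribute nothing to `dTV`, while those with `x₀ ≠ x_k`
have `Q(x) = e^{-δ} E_P(x) / Z_Q`. Comparing configuration by configuration, the only
discrepancies between `dTV(P, Q)` and `Pr_P[x_k = 1]` are bounded by `P(x)` on `{x₀ = 1}`
or by `e^{-δ} E_P(x) / Z_Q`. Finally `x₀` is decoupled under `P`, so flipping it shows
`Pr_P[x₀ = 1] ≤ e^{2 h₀}`.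
-/

lemma spin_eq_one_iff (b : Bool) : spin b = 1 ↔ b = true := by
  cases b <;> norm_num [spin]

lemma spin_mul_le_one (a b : Bool) : spin a * spin b ≤ 1 := by
  cases a <;> cases b <;> norm_num [spin]

lemma spin_mul_spin_of_eq {a b : Bool} (hab : a = b) : spin a * spin b = 1 := by
  subst hab; cases a <;> norm_num [spin]

lemma spin_mul_spin_of_ne {a b : Bool} (hab : a ≠ b) : spin a * spin b = -1 := by
  cases a <;> cases b <;> simp_all [spin]

lemma abs_max_zero_sub_le {p q : ℝ} (hp : 0 ≤ p) (hq : 0 ≤ q) : |max 0 (p - q)| ≤ p := by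
  rw [abs_of_nonneg (le_max_left _ _)]
  exact max_le hp (by linarith)

lemma abs_max_zero_sub_sub_self_le {p q : ℝ} (hp : 0 ≤ p) (hq : 0 ≤ q) :
    |max 0 (p - q) - p| ≤ q := by
  rcases max_cases 0 (p - q) with ⟨hm, _⟩ | ⟨hm, _⟩ <;> rw [hm, abs_le] <;> constructor <;>
    linarith

section Weights

variable {N : ℕ} (w w' : Fin N → Fin N → ℝ) (h : Fin N → ℝ)

lemma isingWeight_pos (x : Fin N → Bool) : 0 < isingWeight w h x := Real.exp_pos _

lemma isingZ_pos [NeZero N] : 0 < isingZ w h :=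
  sum_pos (fun x _ => isingWeight_pos w h x) univ_nonempty

lemma isingWeight_of_eq_ite {a b : Fin N} (hab : a < b) (c : ℝ)
    (hw' : ∀ i j, w' i j = if i = a ∧ j = b then c else w i j) (x : Fin N → Bool) :
    isingWeight w' h x =
      isingWeight w h x * Real.exp ((c - w a b) * spin (x a) * spin (x b)) := by
  have hterm : ∀ i j, w' i j * spin (x i) * spin (x j) = w i j * spin (x i) * spin (x j) +
      if i = a ∧ j = b then (c - w a b) * spin (x a) * spin (x b) else 0 := by
    intro i j
    rw [hw']
    split_ifs with hij
    · obtain ⟨rfl, rfl⟩ := hij; ring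
    · ring
  simp only [isingWeight, ← Real.exp_add, hterm, sum_add_distrib, ite_and]
  simp only [sum_ite_irrel, sum_ite_eq', mem_Ioi, sum_const_zero, mem_univ, ↓reduceIte, hab,
    Real.exp_eq_exp]
  ring

lemma isingWeight_update_true {a : Fin N}
    (hwa : ∀ i j, i < j → (i = a ∨ j = a) → w i j = 0) (x : Fin N → Bool)
    (hx : x a = false) :
    isingWeight w h (Function.update x a true) = Real.exp (2 * h a) * isingWeight w h x := by
  set y := Function.update x a true
  have hpair : ∀ i, ∀ j ∈ Ioi i,
      w i j * spin (y i) * spin (y j) = w i j * spin (x i) * spin (x j) := by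
    intro i j hj
    by_cases hij : i = a ∨ j = a
    · simp [hwa i j (mem_Ioi.mp hj) hij]
    · obtain ⟨hia, hja⟩ := not_or.mp hij
      simp [y, Function.update_of_ne hia, Function.update_of_ne hja]
  have hfield : ∑ i, h i * spin (y i) = ∑ i, h i * spin (x i) + 2 * h a := by
    rw [← sub_eq_iff_eq_add', ← sum_sub_distrib, sum_eq_single a]
    · simp only [y, Function.update_self, hx, spin, Bool.false_eq_true, ↓reduceIte]; ring
    · intro i _ hi; simp [y, Function.update_of_ne hi]
    · simp
  simp only [isingWeight, ← Real.exp_add, sum_congr rfl fun i _ => sum_congr rfl (hpair i),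
    hfield]
  ring_nf

/-- Flipping spin `a` is an involution that maps `{x a = false}` onto `{x a = true}` and
multiplies the weight by `exp (2 h a)` there. -/
lemma sum_isingProb_spin_true_le [NeZero N] {a : Fin N}
    (hwa : ∀ i j, i < j → (i = a ∨ j = a) → w i j = 0) :
    ∑ x with x a = true, isingProb w h x ≤ Real.exp (2 * h a) := by
  let flip : (Fin N → Bool) → Fin N → Bool := fun x => Function.update x a (!x a)
  have hflip : Function.Involutive flip := fun x => by simp [flip]
  have hweight : ∑ x with x a = true, isingWeight w h x ≤ Real.exp (2 * h a) * isingZ w h := by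
    rw [sum_filter, ← hflip.bijective.sum_comp, isingZ, mul_sum]
    refine sum_le_sum fun x _ => ?_
    cases hx : x a
    · simp [flip, hx, isingWeight_update_true w h hwa x hx]
    · simpa [flip, hx] using (mul_pos (Real.exp_pos _) (isingWeight_pos w h x)).le
  simp only [isingProb, ← sum_div]
  rw [div_le_iff₀ (isingZ_pos w h)]
  exact hweight

section Coupling

variable {w w' h} {a b : Fin N} {δ : ℝ}

lemma isingZ_le_exp_mul (hδ : 0 ≤ δ)
    (hE : ∀ x, isingWeight w' h x = isingWeight w h x * Real.exp (δ * spin (x a) * spin (x b))) :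
    isingZ w' h ≤ Real.exp δ * isingZ w h := by
  rw [isingZ, isingZ, mul_sum]
  refine sum_le_sum fun x _ => ?_
  rw [hE, mul_comm (Real.exp δ)]
  refine mul_le_mul_of_nonneg_left (Real.exp_le_exp.mpr ?_) (isingWeight_pos w h x).le
  simpa [mul_assoc] using mul_le_of_le_one_right hδ (spin_mul_le_one (x a) (x b))

lemma isingProb_le_of_eq [NeZero N] (hδ : 0 ≤ δ)
    (hE : ∀ x, isingWeight w' h x = isingWeight w h x * Real.exp (δ * spin (x a) * spin (x b)))
    {x : Fin N → Bool} (hx : x a = x b) : isingProb w h x ≤ isingProb w' h x := by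
  rw [isingProb, isingProb, hE, mul_assoc, spin_mul_spin_of_eq hx, mul_one,
    div_le_div_iff₀ (isingZ_pos w h) (isingZ_pos w' h), mul_assoc]
  exact mul_le_mul_of_nonneg_left (isingZ_le_exp_mul hδ hE) (isingWeight_pos w h x).le

lemma isingProb_of_ne
    (hE : ∀ x, isingWeight w' h x = isingWeight w h x * Real.exp (δ * spin (x a) * spin (x b)))
    {x : Fin N → Bool} (hx : x a ≠ x b) :
    isingProb w' h x = Real.exp (-δ) * isingWeight w h x / isingZ w' h := by
  rw [isingProb, hE, mul_assoc, spin_mul_spin_of_ne hx, mul_neg_one, mul_comm]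

lemma abs_max_sub_isingProb_le [NeZero N] (hδ : 0 ≤ δ)
    (hE : ∀ x, isingWeight w' h x = isingWeight w h x * Real.exp (δ * spin (x a) * spin (x b)))
    (x : Fin N → Bool) :
    |max 0 (isingProb w h x - isingProb w' h x) - (if x b = true then isingProb w h x else 0)|
      ≤ (if x a = true then isingProb w h x else 0) +
        Real.exp (-δ) * isingWeight w h x / isingZ w' h := by
  have hP : 0 ≤ isingProb w h x := div_nonneg (isingWeight_pos w h x).le (isingZ_pos w h).le
  have hQ : 0 ≤ isingProb w' h x := div_nonneg (isingWeight_pos w' h x).le (isingZ_pos w' h).le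
  have hR : 0 ≤ Real.exp (-δ) * isingWeight w h x / isingZ w' h :=
    div_nonneg (mul_nonneg (Real.exp_pos _).le (isingWeight_pos w h x).le) (isingZ_pos w' h).le
  by_cases hx : x a = x b
  · rw [max_eq_left (sub_nonpos.mpr (isingProb_le_of_eq hδ hE hx)), zero_sub, abs_neg, hx]
    split_ifs <;> simp [abs_of_nonneg hP, hR]
  · rw [← isingProb_of_ne hE hx]
    cases ha : x a <;> cases hb : x b <;> simp only [ha, hb, not_true_eq_false] at hx
    · simpa using abs_max_zero_sub_sub_self_le hP hQ
    · simpa using (abs_max_zero_sub_le hP hQ).trans (le_add_of_nonneg_right hQ)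

end Coupling

end Weights

/-- let `P` be an Ising model on `x_0, …, x_n` with `w_{0,i} = 0` for all
`i ≥ 1`, and let `Q` be the same model except that `w'_{0,k} = δ > 0`. Then
`|dTV(P,Q) − Pr_P[x_k = 1]| ≤ 3 exp(2 h_0) + exp(−δ) · Z_P / Z_Q`. -/
theorem ising_tv_approximates_marginal
    (n : ℕ) (w : Fin (n + 1) → Fin (n + 1) → ℝ) (h : Fin (n + 1) → ℝ)
    (hw0 : ∀ i : Fin (n + 1), i ≠ 0 → w 0 i = 0)
    (k : Fin (n + 1)) (hk : k ≠ 0) (δ : ℝ) (hδ : 0 < δ)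
    (w' : Fin (n + 1) → Fin (n + 1) → ℝ)
    (hw' : ∀ i j, w' i j = if i = 0 ∧ j = k then δ else w i j) :
    |(∑ x : Fin (n + 1) → Bool, max 0 (isingProb w h x - isingProb w' h x)) -
        ∑ x ∈ Finset.univ.filter (fun x : Fin (n + 1) → Bool => spin (x k) = 1),
          isingProb w h x|
      ≤ 3 * Real.exp (2 * h 0) + Real.exp (-δ) * isingZ w h / isingZ w' h := by
  have hE : ∀ x, isingWeight w' h x =
      isingWeight w h x * Real.exp (δ * spin (x 0) * spin (x k)) := fun x => by
    rw [isingWeight_of_eq_ite w w' h (Fin.pos_of_ne_zero hk) δ hw' x, hw0 k hk, sub_zero]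
  have hdecoupled : ∀ i j : Fin (n + 1), i < j → (i = 0 ∨ j = 0) → w i j = 0 := by
    rintro i j hij (rfl | rfl)
    · exact hw0 j hij.ne'
    · exact absurd hij (Fin.not_lt_zero i)
  calc _ = |∑ x : Fin (n + 1) → Bool, (max 0 (isingProb w h x - isingProb w' h x) -
          if x k = true then isingProb w h x else 0)| := by
        simp only [spin_eq_one_iff, sum_filter, sum_sub_distrib]
    _ ≤ ∑ x : Fin (n + 1) → Bool, ((if x 0 = true then isingProb w h x else 0) +
          Real.exp (-δ) * isingWeight w h x / isingZ w' h) :=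
        (abs_sum_le_sum_abs _ _).trans
          (sum_le_sum fun x _ => abs_max_sub_isingProb_le hδ.le hE x)
    _ = ∑ x with x 0 = true, isingProb w h x + Real.exp (-δ) * isingZ w h / isingZ w' h := by
        rw [sum_add_distrib, sum_filter, ← sum_div, ← mul_sum]; rfl
    _ ≤ _ := by
        linarith [sum_isingProb_spin_true_le w h hdecoupled, Real.exp_pos (2 * h 0)]
end
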